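/- Let $p \equiv 3 \pmod 4$ be a prime power, $\delta$ a generator of the group of nonzero squares of $\mathbb{F}_p$, and consider the second-type Paley sequence $(f_0,\dots,f_p) = (0,0,\delta,\delta,\delta^2,\delta^2,\ldots,\delta^{(p-1)/2},\delta^{(p-1)/2})$ together with second coordinates $(\phi_0,\dots,\phi_p) = (y,-y,y_1,-y_1,\ldots,y_{(p-1)/2},-y_{(p-1)/2})$ with $y, y_i \in \mathbb{F}_q^*$ and $q$ odd. Then for each nonzero $h \in \mathbb{F}_p$, the multiset $T_h = [\phi_a - \phi_b : f_a - f_b = h, a \neq b]$ satisfies $T_h = \{1,-1\} \cdot D_h$ for a multiset $D_h$ of size $(p+1)/2$ all of whose entries are of the form $y_i \pm y_j$ or $y_i \pm y$, and $T_h = T_{-h}$; moreover $T_0 = \{1,-1\}\cdot(2\cdot[y,y_1,\ldots,y_{(p-1)/2}])$. -/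

import Mathlib

/-! The positions come in pairs `(i, 0), (i, 1)` sharing the first coordinate `g i` (`0` or `δ^i`)
and carrying the second coordinates `± y i`. Hence every pair `i ≠ j` with `g i - g j = h`
contributes the four differences `±(y i - y j)`, `±(y i + y j)` to `T_h`, while `T_0` only sees
the two positions of a single index and consists of `±2 y i`. As `g` enumerates the squares of
`𝔽_p`, the number of such pairs is the number `N(h)` of representations of `h` as a difference
of two squares. Since `-1` is a nonsquare, `N` is invariant under `h ↦ c h` for squares `c` and
under `h ↦ -h`, hence constant on `𝔽_p^*`; counting ordered pairs of distinct squares gives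
`(p - 1) N = (p + 1)/2 · (p - 1)/2`, so `N = (p + 1)/4`. Finally, reversing pairs shows
`T_{-h} = -T_h`, and `{1, -1} · D_h` is symmetric. -/

open scoped Classical

/-- The multiset `[φ a - φ b : f a - f b = h, a ≠ b]` of second-coordinate differences
taken over ordered pairs of distinct positions whose first-coordinate difference is `h`. -/
def Tdiff {ι Fp Fq : Type*} [Fintype ι] [DecidableEq ι] [AddCommGroup Fp] [DecidableEq Fp]
    [AddCommGroup Fq] (f : ι → Fp) (φ : ι → Fq) (h : Fp) : Multiset Fq :=
  ((Finset.univ.offDiag : Finset (ι × ι)).filter fun p => f p.1 - f p.2 = h).val.map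
    fun p => φ p.1 - φ p.2

/-- The second-type Paley sequence `(0, 0, δ, δ, δ², δ², …, δ^m, δ^m)` with
`m = (p-1)/2`: position `(i,t)` carries `0` if `i = 0` and `δ^i` otherwise. -/
def paley2fst {Fp : Type*} [Field Fp] (δ : Fp) (m : ℕ) : Fin (m + 1) × Fin 2 → Fp :=
  fun p => if p.1 = 0 then 0 else δ ^ (p.1 : ℕ)

/-- The corresponding second coordinates `(y, -y, y₁, -y₁, …, y_m, -y_m)`, encoded by a
single tuple `y : Fin (m+1) → Fq` with `y 0` playing the role of `y`. -/
def paley2snd {Fq : Type*} [Field Fq] {m : ℕ} (y : Fin (m + 1) → Fq) :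
    Fin (m + 1) × Fin 2 → Fq :=
  fun p => (if p.2 = 0 then 1 else -1) * y p.1

open Finset

lemma Multiset.bind_one_neg_one_map_mul {R : Type*} [Ring R] (D : Multiset R) :
    (({1, -1} : Multiset R).bind fun c => D.map fun z => c * z) = D + D.map Neg.neg := by
  simp [Multiset.insert_eq_cons]

section pmDiffs
variable {ι Fp Fq : Type*} [Fintype ι] [AddCommGroup Fp] [DecidableEq Fp] [Ring Fq]

/-- The multiset `D_h` of the paper, for the doubled sequence with first coordinates `g`. -/
def pmDiffs (g : ι → Fp) (y : ι → Fq) (h : Fp) : Multiset Fq :=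
  ∑ ij ∈ univ.filter (fun ij : ι × ι => g ij.1 - g ij.2 = h),
    {y ij.1 - y ij.2, y ij.1 + y ij.2}

lemma card_pmDiffs (g : ι → Fp) (y : ι → Fq) (h : Fp) :
    Multiset.card (pmDiffs g y h) = 2 * #{ij : ι × ι | g ij.1 - g ij.2 = h} := by
  simp [pmDiffs, Multiset.card_sum, mul_comm]

lemma exists_of_mem_pmDiffs {g : ι → Fp} {y : ι → Fq} {h : Fp} {z : Fq}
    (hz : z ∈ pmDiffs g y h) : ∃ i j, z = y i - y j ∨ z = y i + y j := by
  obtain ⟨ij, -, hz⟩ := Multiset.mem_sum.mp hz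
  exact ⟨ij.1, ij.2, by simpa using hz⟩

end pmDiffs

section Tdiff
variable {ι Fp Fq : Type*} [Fintype ι] [DecidableEq ι] [AddCommGroup Fp] [DecidableEq Fp]

lemma Tdiff_eq_sum [AddCommGroup Fq] (f : ι → Fp) (φ : ι → Fq) (h : Fp) :
    Tdiff f φ h = ∑ a, ∑ b, if a ≠ b ∧ f a - f b = h then {φ a - φ b} else 0 := by
  have hpairs : univ.offDiag.filter (fun p : ι × ι => f p.1 - f p.2 = h) =
      univ.filter fun p => p.1 ≠ p.2 ∧ f p.1 - f p.2 = h := by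
    ext p
    simp
  rw [Tdiff, hpairs, ← Multiset.sum_map_singleton (Multiset.map _ _), Multiset.map_map,
    sum_map_val, sum_filter, Fintype.sum_prod_type]
  rfl

lemma Tdiff_neg [AddCommGroup Fq] (f : ι → Fp) (φ : ι → Fq) (h : Fp) :
    Tdiff f φ (-h) = (Tdiff f φ h).map Neg.neg := by
  rw [Tdiff_eq_sum, Tdiff_eq_sum, ← Multiset.coe_mapAddMonoidHom, map_sum, sum_comm]
  refine sum_congr rfl fun a _ => ?_
  rw [map_sum]
  refine sum_congr rfl fun b _ => ?_
  have hiff : (b ≠ a ∧ f b - f a = -h) ↔ (a ≠ b ∧ f a - f b = h) := by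
    rw [ne_comm, ← neg_sub, neg_inj]
  simp only [hiff]
  split_ifs <;> simp

variable [Ring Fq]

lemma Tdiff_doubled_signed_of_ne_zero (g : ι → Fp) (y : ι → Fq) {h : Fp} (hh : h ≠ 0) :
    Tdiff (fun p : ι × Fin 2 => g p.1) (fun p => (if p.2 = 0 then 1 else -1) * y p.1) h =
      pmDiffs g y h + (pmDiffs g y h).map Neg.neg := by
  rw [Tdiff_eq_sum, pmDiffs, ← Multiset.coe_mapAddMonoidHom, map_sum, ← sum_add_distrib,
    sum_filter]
  simp only [Fintype.sum_prod_type, Fin.sum_univ_two, ← sum_add_distrib]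
  refine sum_congr rfl fun i _ => sum_congr rfl fun j _ => ?_
  by_cases hc : g i - g j = h
  · have hij : i ≠ j := by
      rintro rfl
      exact hh (by rw [← hc, sub_self])
    simp only [Fin.isValue, ne_eq, Prod.mk.injEq, hij, and_true, not_false_eq_true, hc, and_self,
      ↓reduceIte, one_mul, zero_ne_one, one_ne_zero, neg_mul, sub_neg_eq_add,
      Multiset.insert_eq_cons, ← Multiset.singleton_add, Multiset.mapAddMonoidHom_apply,
      Multiset.map_add, Multiset.map_singleton, neg_sub, neg_add_rev]
    rw [show -y i - y j = -y j + -y i by abel, show -y i + y j = y j - y i by abel]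
    abel
  · simp [hc]

lemma Tdiff_doubled_signed_zero {g : ι → Fp} (hg : Function.Injective g) (y : ι → Fq) :
    Tdiff (fun p : ι × Fin 2 => g p.1) (fun p => (if p.2 = 0 then 1 else -1) * y p.1) 0 =
      univ.val.map (fun i => 2 * y i) + (univ.val.map (fun i => 2 * y i)).map Neg.neg := by
  rw [Tdiff_eq_sum, Multiset.map_map, ← Multiset.sum_map_singleton (Multiset.map _ _),
    ← Multiset.sum_map_singleton (Multiset.map (Neg.neg ∘ _) _), Multiset.map_map,
    Multiset.map_map, sum_map_val, sum_map_val, ← sum_add_distrib]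
  simp only [Fintype.sum_prod_type, Fin.sum_univ_two, ← sum_add_distrib]
  refine sum_congr rfl fun i _ => ?_
  rw [sum_eq_single i]
  · simp [two_mul, sub_eq_add_neg]
  · intro j _ hji
    have : g i - g j ≠ 0 := sub_ne_zero.mpr (hg.ne hji.symm)
    simp [this]
  · simp

end Tdiff

section Squares
variable {F : Type*} [Field F] [Fintype F] [DecidableEq F]

lemma two_mul_card_isSquare (hF : ringChar F ≠ 2) :
    2 * #{x : F | IsSquare x} = Fintype.card F + 1 := by
  have hpoint : ∀ x : F, 2 * (if IsSquare x then 1 else 0 : ℤ) =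
      quadraticChar F x + 1 + if x = 0 then 1 else 0 := by
    intro x
    by_cases hx : x = 0
    · simp [hx]
    by_cases hsq : IsSquare x
    · simp [hx, hsq, (quadraticChar_one_iff_isSquare hx).mpr hsq]
    · simp [hx, hsq, quadraticChar_neg_one_iff_not_isSquare.mpr hsq]
  have hsum : (2 * #{x : F | IsSquare x} : ℤ) = Fintype.card F + 1 := by
    rw [← sum_boole, mul_sum, sum_congr rfl fun x _ => hpoint x, sum_add_distrib, sum_add_distrib,
      quadraticChar_sum_zero hF]
    simp
  exact_mod_cast hsum

lemma isSquare_or_isSquare_neg (hF : ¬IsSquare (-1 : F)) (c : F) :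
    IsSquare c ∨ IsSquare (-c) := by
  by_contra! hcon
  have hneg_one : quadraticChar F (-1) = -1 := quadraticChar_neg_one_iff_not_isSquare.mpr hF
  have hneg_c := quadraticChar_neg_one_iff_not_isSquare.mpr hcon.2
  rw [neg_eq_neg_one_mul, map_mul, hneg_one,
    quadraticChar_neg_one_iff_not_isSquare.mpr hcon.1] at hneg_c
  norm_num at hneg_c

def squareDiffPairs (h : F) : Finset (F × F) :=
  {ab | IsSquare ab.1 ∧ IsSquare ab.2 ∧ ab.1 - ab.2 = h}

lemma card_squareDiffPairs_mul {c : F} (hc : c ≠ 0) (hsq : IsSquare c) (h : F) :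
    #(squareDiffPairs (c * h)) = #(squareDiffPairs h) := by
  apply card_nbij' (fun ab => (c⁻¹ * ab.1, c⁻¹ * ab.2)) (fun ab => (c * ab.1, c * ab.2))
  · rintro ⟨a, b⟩ hab
    simp only [squareDiffPairs, mem_coe, mem_filter, mem_univ, true_and] at hab ⊢
    refine ⟨hsq.inv.mul hab.1, hsq.inv.mul hab.2.1, ?_⟩
    rw [← mul_sub, hab.2.2, inv_mul_cancel_left₀ hc]
  · rintro ⟨a, b⟩ hab
    simp only [squareDiffPairs, mem_coe, mem_filter, mem_univ, true_and] at hab ⊢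
    exact ⟨hsq.mul hab.1, hsq.mul hab.2.1, by rw [← mul_sub, hab.2.2]⟩
  · intro ab _
    simp [hc]
  · intro ab _
    simp [hc]

lemma card_squareDiffPairs_neg (h : F) :
    #(squareDiffPairs (-h)) = #(squareDiffPairs h) := by
  apply card_nbij' Prod.swap Prod.swap
  · rintro ⟨a, b⟩ hab
    simp only [squareDiffPairs, mem_coe, mem_filter, mem_univ, true_and, Prod.swap] at hab ⊢
    exact ⟨hab.2.1, hab.1, by rw [← neg_sub, hab.2.2, neg_neg]⟩
  · rintro ⟨a, b⟩ hab
    simp only [squareDiffPairs, mem_coe, mem_filter, mem_univ, true_and, Prod.swap] at hab ⊢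
    exact ⟨hab.2.1, hab.1, by rw [← neg_sub, hab.2.2]⟩
  · intro ab _
    rfl
  · intro ab _
    rfl

lemma card_squareDiffPairs_eq (hF : ¬IsSquare (-1 : F)) {h h' : F} (hh : h ≠ 0)
    (hh' : h' ≠ 0) : #(squareDiffPairs h') = #(squareDiffPairs h) := by
  have hc : h' * h⁻¹ ≠ 0 := mul_ne_zero hh' (inv_ne_zero hh)
  rcases isSquare_or_isSquare_neg hF (h' * h⁻¹) with hsq | hsq
  · calc #(squareDiffPairs h') = #(squareDiffPairs (h' * h⁻¹ * h)) := by
          rw [inv_mul_cancel_right₀ hh]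
      _ = #(squareDiffPairs h) := card_squareDiffPairs_mul hc hsq h
  · calc #(squareDiffPairs h') = #(squareDiffPairs (-(h' * h⁻¹) * -h)) := by
          rw [neg_mul_neg, inv_mul_cancel_right₀ hh]
      _ = #(squareDiffPairs (-h)) := card_squareDiffPairs_mul (neg_ne_zero.mpr hc) hsq (-h)
      _ = #(squareDiffPairs h) := card_squareDiffPairs_neg h

lemma sum_card_squareDiffPairs :
    ∑ h ∈ univ.erase (0 : F), #(squareDiffPairs h) =
      #{x : F | IsSquare x} * #{x : F | IsSquare x} - #{x : F | IsSquare x} := by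
  rw [← offDiag_card, card_eq_sum_card_fiberwise (f := fun ab => ab.1 - ab.2) (t := univ.erase 0)]
  · refine sum_congr rfl fun h hh => congrArg card ?_
    ext ⟨a, b⟩
    have hh : h ≠ 0 := (mem_erase.mp hh).1
    simp only [squareDiffPairs, mem_filter, mem_offDiag, mem_univ, true_and]
    constructor
    · rintro ⟨ha, hb, hab⟩
      exact ⟨⟨ha, hb, fun he => hh (by rw [← hab, he, sub_self])⟩, hab⟩
    · rintro ⟨⟨ha, hb, -⟩, hab⟩
      exact ⟨ha, hb, hab⟩
  · rintro ⟨a, b⟩ hab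
    simp only [coe_offDiag, Set.mem_offDiag, mem_coe, mem_filter, mem_univ, true_and] at hab
    simpa [sub_eq_zero] using hab.2.2

lemma four_mul_card_squareDiffPairs (hF : Fintype.card F % 4 = 3) {h : F} (hh : h ≠ 0) :
    4 * #(squareDiffPairs h) = Fintype.card F + 1 := by
  have hchar : ringChar F ≠ 2 := FiniteField.even_card_iff_char_two.not.mpr (by omega)
  have hneg_one : ¬IsSquare (-1 : F) := FiniteField.isSquare_neg_one_iff.not.mpr (by omega)
  have hsq := two_mul_card_isSquare hchar
  have hsum := sum_card_squareDiffPairs (F := F)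
  rw [sum_congr rfl fun h' hh' => card_squareDiffPairs_eq hneg_one hh (mem_erase.mp hh').1,
    sum_const, card_erase_of_mem (mem_univ _), card_univ, smul_eq_mul] at hsum
  set n := #{x : F | IsSquare x}
  set N := #(squareDiffPairs h)
  have hn : 2 ≤ n := by omega
  have hmul : (n - 1) * (2 * N) = (n - 1) * n := by
    rw [show n * n - n = (n - 1) * n by rw [Nat.sub_one_mul]] at hsum
    rw [← hsum, show Fintype.card F - 1 = 2 * (n - 1) by omega]
    ring
  have h2N := Nat.eq_of_mul_eq_mul_left (by omega) hmul
  omega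

lemma card_filter_sub_eq_card_squareDiffPairs {ι : Type*} [Fintype ι] {g : ι → F}
    (hg : Function.Injective g) (hrange : Set.range g = {x | IsSquare x}) (h : F) :
    #{ij : ι × ι | g ij.1 - g ij.2 = h} = #(squareDiffPairs h) := by
  have hsq (x : F) : IsSquare x ↔ ∃ i, g i = x := by rw [← Set.mem_range, hrange]; rfl
  have himage : squareDiffPairs h = image (Prod.map g g) {ij : ι × ι | g ij.1 - g ij.2 = h} := by
    ext ⟨a, b⟩
    simp only [squareDiffPairs, mem_filter, mem_univ, true_and, mem_image, Prod.exists,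
      Prod.map_apply, Prod.mk.injEq, hsq]
    constructor
    · rintro ⟨⟨i, rfl⟩, ⟨j, rfl⟩, hij⟩
      exact ⟨i, j, hij, rfl, rfl⟩
    · rintro ⟨i, j, hij, rfl, rfl⟩
      exact ⟨⟨i, rfl⟩, ⟨j, rfl⟩, hij⟩
  rw [himage, card_image_of_injective _ (hg.prodMap hg)]

end Squares

def paleyBase {Fp : Type*} [Field Fp] (δ : Fp) (m : ℕ) : Fin (m + 1) → Fp :=
  fun i => if i = 0 then 0 else δ ^ (i : ℕ)

lemma paley2fst_eq {Fp : Type*} [Field Fp] (δ : Fp) (m : ℕ) :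
    paley2fst δ m = fun p => paleyBase δ m p.1 := rfl

lemma paley2snd_eq {Fq : Type*} [Field Fq] {m : ℕ} (y : Fin (m + 1) → Fq) :
    paley2snd y = fun p => (if p.2 = 0 then 1 else -1) * y p.1 := rfl

section Paley
variable {Fp : Type*} [Field Fp] [Fintype Fp] [DecidableEq Fp] {m : ℕ} {δ : Fp}

lemma range_paleyBase (hm : Fintype.card Fp = 2 * m + 1)
    (hδ : ∀ x : Fp, (x ≠ 0 ∧ IsSquare x) ↔ ∃ i : ℕ, δ ^ i = x) :
    Set.range (paleyBase δ m) = {x | IsSquare x} := by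
  have hm0 : 0 < m := by
    have := Fintype.one_lt_card (α := Fp)
    omega
  have hδm : δ ^ m = 1 := by
    obtain ⟨hδ0, r, rfl⟩ := (hδ δ).mpr ⟨1, pow_one δ⟩
    rw [← sq, ← pow_mul, show 2 * m = Fintype.card Fp - 1 by omega,
      FiniteField.pow_card_sub_one_eq_one r (by rintro rfl; simp at hδ0)]
  ext x
  constructor
  · rintro ⟨i, rfl⟩
    by_cases hi : i = 0
    · simp [paleyBase, hi]
    · simpa [paleyBase, hi] using ((hδ _).mpr ⟨i, rfl⟩).2
  · intro hx
    by_cases hx0 : x = 0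
    · exact ⟨0, by simp [paleyBase, hx0]⟩
    obtain ⟨n, rfl⟩ := (hδ x).mp ⟨hx0, hx⟩
    rw [pow_eq_pow_mod n hδm]
    rcases Nat.eq_zero_or_pos (n % m) with h0 | hpos
    · exact ⟨Fin.last m, by simp [paleyBase, h0, hδm, Fin.ext_iff, hm0.ne']⟩
    · exact ⟨⟨n % m, by have := Nat.mod_lt n hm0; omega⟩,
        by simp [paleyBase, Fin.ext_iff, hpos.ne']⟩

lemma paleyBase_injective (hm : Fintype.card Fp = 2 * m + 1)
    (hδ : ∀ x : Fp, (x ≠ 0 ∧ IsSquare x) ↔ ∃ i : ℕ, δ ^ i = x) :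
    Function.Injective (paleyBase δ m) := by
  have hchar : ringChar Fp ≠ 2 := FiniteField.even_card_iff_char_two.not.mpr (by omega)
  have hsq := two_mul_card_isSquare hchar
  have himage : univ.image (paleyBase δ m) = ({x | IsSquare x} : Finset Fp) := by
    ext x
    have := Set.ext_iff.mp (range_paleyBase hm hδ) x
    simp_all
  have hcard : #(univ.image (paleyBase δ m)) = #(univ : Finset (Fin (m + 1))) := by
    rw [himage, card_univ, Fintype.card_fin]
    omega
  intro i j hij
  exact injOn_of_card_image_eq hcard (mem_coe.2 (mem_univ i)) (mem_coe.2 (mem_univ j)) hij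

end Paley

theorem paper_stmt_17_general {Fp Fq : Type*} [Field Fp] [Fintype Fp] [DecidableEq Fp] [Field Fq]
    (m : ℕ) (hm : Fintype.card Fp = 2 * m + 1) (hp4 : Fintype.card Fp % 4 = 3)
    (δ : Fp) (hδ : ∀ x : Fp, (x ≠ 0 ∧ IsSquare x) ↔ ∃ i : ℕ, δ ^ i = x)
    (y : Fin (m + 1) → Fq) :
    (∀ h : Fp, h ≠ 0 →
      (∃ Dh : Multiset Fq,
        Tdiff (paley2fst δ m) (paley2snd y) h =
          (({1, -1} : Multiset Fq).bind fun c => Dh.map fun z => c * z) ∧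
        Multiset.card Dh = m + 1 ∧
        ∀ z ∈ Dh, ∃ i j : Fin (m + 1), z = y i - y j ∨ z = y i + y j) ∧
      Tdiff (paley2fst δ m) (paley2snd y) h =
        Tdiff (paley2fst δ m) (paley2snd y) (-h)) ∧
    Tdiff (paley2fst δ m) (paley2snd y) 0 =
      (({1, -1} : Multiset Fq).bind fun c =>
        ((Finset.univ : Finset (Fin (m + 1))).val.map fun i => 2 * y i).map
          fun z => c * z) := by
  have hg := paleyBase_injective hm hδ
  have hcount (h : Fp) (hh : h ≠ 0) : Multiset.card (pmDiffs (paleyBase δ m) y h) = m + 1 := by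
    have := four_mul_card_squareDiffPairs hp4 hh
    rw [card_pmDiffs, card_filter_sub_eq_card_squareDiffPairs hg (range_paleyBase hm hδ)]
    omega
  rw [paley2fst_eq, paley2snd_eq]
  simp only [Multiset.bind_one_neg_one_map_mul]
  refine ⟨fun h hh => ⟨⟨pmDiffs (paleyBase δ m) y h, Tdiff_doubled_signed_of_ne_zero _ y hh,
    hcount h hh, fun z hz => exists_of_mem_pmDiffs hz⟩, ?_⟩, Tdiff_doubled_signed_zero hg y⟩
  rw [Tdiff_neg, Tdiff_doubled_signed_of_ne_zero _ y hh, Multiset.map_add, Multiset.map_map,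
    neg_involutive.comp_self, Multiset.map_id, add_comm]

/-- Lemma 3.14: for `p ≡ 3 (mod 4)` a prime power, `δ` a generator of the nonzero
squares of `F_p`, `q` odd and arbitrary `y, y₁, …, y_m ∈ F_q^*` (`m = (p-1)/2`),
for each nonzero `h ∈ F_p` the multiset `T_h` has the form `{1,-1} · D_h` for a
multiset `D_h` of size `(p+1)/2 = m+1` all of whose entries are of the form
`yᵢ ± yⱼ` or `yᵢ ± y`, and `T_h = T_{-h}`; moreover
`T_0 = {1,-1} · (2 · [y, y₁, …, y_m])`. -/
theorem paper_stmt_17 {Fp Fq : Type*} [Field Fp] [Fintype Fp] [DecidableEq Fp] [Field Fq]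
    (m : ℕ) (hm : Fintype.card Fp = 2 * m + 1) (hp4 : Fintype.card Fp % 4 = 3)
    (δ : Fp) (hδ : ∀ x : Fp, (x ≠ 0 ∧ IsSquare x) ↔ ∃ i : ℕ, δ ^ i = x)
    (h2 : (2 : Fq) ≠ 0)
    (y : Fin (m + 1) → Fq) (hy : ∀ i, y i ≠ 0) :
    (∀ h : Fp, h ≠ 0 →
      (∃ Dh : Multiset Fq,
        Tdiff (paley2fst δ m) (paley2snd y) h =
          (({1, -1} : Multiset Fq).bind fun c => Dh.map fun z => c * z) ∧
        Multiset.card Dh = m + 1 ∧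
        ∀ z ∈ Dh, ∃ i j : Fin (m + 1), z = y i - y j ∨ z = y i + y j) ∧
      Tdiff (paley2fst δ m) (paley2snd y) h =
        Tdiff (paley2fst δ m) (paley2snd y) (-h)) ∧
    Tdiff (paley2fst δ m) (paley2snd y) 0 =
      (({1, -1} : Multiset Fq).bind fun c =>
        ((Finset.univ : Finset (Fin (m + 1))).val.map fun i => 2 * y i).map
          fun z => c * z) :=
  paper_stmt_17_general m hm hp4 δ hδ y
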